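/- arXiv:2402.03583 — 10 statements merged into one kernel-verified Lean document; each statement's English description precedes it below -/
import Mathlib

section
/- Let V be a seminormed additive commutative group, and let E and R be arbitrary types (of entities and relations). Suppose f, g : E × R → V and define the score s(h, r, t) = ‖f(h, r) − g(t, r)‖. If entities e₁, e₂, e₃, e₄ and a relation r satisfy s(e₁, r, e₂) = 0, s(e₃, r, e₂) = 0, and s(e₃, r, e₄) = 0, then s(e₁, r, e₄) = 0. -/
theorem z_paradox_distance_based
    {V : Type*} [SeminormedAddCommGroup V] {E R : Type*}
    (f g : E × R → V)
    (s : E → R → E → ℝ)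
    (hs : ∀ h r t, s h r t = ‖f (h, r) - g (t, r)‖)
    (e₁ e₂ e₃ e₄ : E) (r : R)
    (h12 : s e₁ r e₂ = 0) (h32 : s e₃ r e₂ = 0) (h34 : s e₃ r e₄ = 0) :
    s e₁ r e₄ = 0 := by
  simp only [hs] at *
  have key : f (e₁, r) - g (e₄, r) =
      (f (e₁, r) - g (e₂, r)) - (f (e₃, r) - g (e₂, r)) + (f (e₃, r) - g (e₄, r)) := by
    abel
  rw [key]
  refine le_antisymm ?_ (norm_nonneg _)
  calc ‖_‖ ≤ ‖(f (e₁, r) - g (e₂, r)) - (f (e₃, r) - g (e₂, r))‖ + ‖f (e₃, r) - g (e₄, r)‖ :=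
        norm_add_le _ _
    _ ≤ ‖f (e₁, r) - g (e₂, r)‖ + ‖f (e₃, r) - g (e₂, r)‖ + ‖f (e₃, r) - g (e₄, r)‖ := by
        gcongr; exact norm_sub_le _ _
    _ = 0 := by rw [h12, h32, h34]; ring
end

section
/- Let e₁, e₂, e₃, e₄, r be vectors in ℝⁿ and define the TransE score s(h, r, t) = ‖h + r − t‖ (Euclidean norm). If s(e₁, r, e₂) = 0, s(e₃, r, e₂) = 0, and s(e₃, r, e₄) = 0, then s(e₁, r, e₄) = 0. -/
theorem z_paradox_transE {n : ℕ}
    (e₁ e₂ e₃ e₄ r : EuclideanSpace ℝ (Fin n))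
    (s : EuclideanSpace ℝ (Fin n) → EuclideanSpace ℝ (Fin n) →
      EuclideanSpace ℝ (Fin n) → ℝ)
    (hs : ∀ h r t, s h r t = ‖h + r - t‖)
    (h12 : s e₁ r e₂ = 0) (h32 : s e₃ r e₂ = 0) (h34 : s e₃ r e₄ = 0) :
    s e₁ r e₄ = 0 := by
  simp only [hs, norm_eq_zero, sub_eq_zero] at *
  rw [h12, ← h32, h34]
end

section
/- Let e₁, e₂, e₃, e₄, r be vectors in ℂⁿ and define the RotatE score s(h, r, t) = ‖h ∘ r − t‖, where ∘ denotes the entrywise (Hadamard) product of complex vectors. If s(e₁, r, e₂) = 0, s(e₃, r, e₂) = 0, and s(e₃, r, e₄) = 0, then s(e₁, r, e₄) = 0. -/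
noncomputable def rotatEScore {n : ℕ} (h r t : EuclideanSpace ℂ (Fin n)) : ℝ :=
  let hr : EuclideanSpace ℂ (Fin n) := WithLp.toLp 2 (fun i => h i * r i)
  ‖hr - t‖

theorem rotatEScore_eq_zero_iff {n : ℕ} {h r t : EuclideanSpace ℂ (Fin n)} :
    rotatEScore h r t = 0 ↔ WithLp.toLp 2 (fun i => h i * r i) = t := by
  rw [rotatEScore, norm_eq_zero, sub_eq_zero]

theorem z_paradox_rotatE {n : ℕ}
    (e₁ e₂ e₃ e₄ r : EuclideanSpace ℂ (Fin n))
    (h12 : rotatEScore e₁ r e₂ = 0) (h32 : rotatEScore e₃ r e₂ = 0)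
    (h34 : rotatEScore e₃ r e₄ = 0) :
    rotatEScore e₁ r e₄ = 0 := by
  rw [rotatEScore_eq_zero_iff] at *
  rw [h12, ← h32, h34]
end

section
/- Let H₁, H₃, T₂, T₄, R, R̂ be d × d real matrices and define the MQuadE score s(H, ⟨R, R̂⟩, T) = ‖H R − R̂ T‖_F (Frobenius norm). If s(H₁, ⟨R, R̂⟩, T₂) = 0, s(H₃, ⟨R, R̂⟩, T₂) = 0, and s(H₃, ⟨R, R̂⟩, T₄) = 0, then s(H₁, ⟨R, R̂⟩, T₄) = 0. -/
attribute [local instance] Matrix.frobeniusNormedAddCommGroup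

noncomputable def mquadEScore {d : ℕ} (H : Matrix (Fin d) (Fin d) ℝ)
    (R Rhat : Matrix (Fin d) (Fin d) ℝ) (T : Matrix (Fin d) (Fin d) ℝ) : ℝ :=
  ‖H * R - Rhat * T‖

theorem z_paradox_mquadE {d : ℕ}
    (H₁ H₃ T₂ T₄ R Rhat : Matrix (Fin d) (Fin d) ℝ)
    (h12 : mquadEScore H₁ R Rhat T₂ = 0)
    (h32 : mquadEScore H₃ R Rhat T₂ = 0)
    (h34 : mquadEScore H₃ R Rhat T₄ = 0) :
    mquadEScore H₁ R Rhat T₄ = 0 := by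
  unfold mquadEScore at *
  rw [norm_eq_zero, sub_eq_zero] at *
  rw [h12, ← h34, h32]
end

section
/- Let H, T, Rʰ, Rᵗ, Rᶜ be d × d real matrices with H and T symmetric (Hᵀ = H, Tᵀ = T), and suppose (Rᵗ)ᵀ = −Rʰ and (Rᶜ)ᵀ = Rᶜ. Then H Rʰ − Rᵗ T + H Rᶜ T = 0 if and only if T Rʰ − Rᵗ H + T Rᶜ H = 0. -/
open Matrix

theorem mquinE_symmetric_relation_case1 {d : ℕ}
    (H T Rh Rt Rc : Matrix (Fin d) (Fin d) ℝ)
    (hH : Hᵀ = H) (hT : Tᵀ = T)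
    (hRt : Rtᵀ = -Rh) (hRc : Rcᵀ = Rc) :
    H * Rh - Rt * T + H * Rc * T = 0 ↔ T * Rh - Rt * H + T * Rc * H = 0 := by
  have hRh : Rhᵀ = -Rt := by
    have := congrArg Matrix.transpose hRt
    simp only [transpose_transpose, transpose_neg] at this
    rw [this]; simp
  constructor
  · intro h
    have := congrArg Matrix.transpose h
    simp only [transpose_add, transpose_sub, transpose_mul, transpose_zero,
      hH, hT, hRh, hRt, hRc, Matrix.neg_mul, Matrix.mul_neg] at this
    linear_combination (norm := noncomm_ring) this
  · intro h
    have := congrArg Matrix.transpose h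
    simp only [transpose_add, transpose_sub, transpose_mul, transpose_zero,
      hH, hT, hRh, hRt, hRc, Matrix.neg_mul, Matrix.mul_neg] at this
    linear_combination (norm := noncomm_ring) this
end

section
/- Let H, T, Rʰ, Rᵗ, Rᶜ be d × d real matrices with H and T symmetric (Hᵀ = H, Tᵀ = T), and suppose (Rᵗ)ᵀ = Rʰ and (Rᶜ)ᵀ = −Rᶜ. Then H Rʰ − Rᵗ T + H Rᶜ T = 0 if and only if T Rʰ − Rᵗ H + T Rᶜ H = 0. -/
open Matrix

theorem mquinE_symmetric_relation_case2 {d : ℕ}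
    (H T Rh Rt Rc : Matrix (Fin d) (Fin d) ℝ)
    (hH : Hᵀ = H) (hT : Tᵀ = T)
    (hRt : Rtᵀ = Rh) (hRc : Rcᵀ = -Rc) :
    H * Rh - Rt * T + H * Rc * T = 0 ↔ T * Rh - Rt * H + T * Rc * H = 0 := by
  have hRh : Rhᵀ = Rt := by rw [← hRt, transpose_transpose]
  have key : (H * Rh - Rt * T + H * Rc * T)ᵀ = -(T * Rh - Rt * H + T * Rc * H) := by
    simp [transpose_add, transpose_sub, transpose_mul, hH, hT, hRt, hRc, hRh,
      Matrix.mul_assoc, Matrix.neg_mul, Matrix.mul_neg]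
    noncomm_ring
  constructor
  · intro h
    have := congrArg transpose h
    rw [key, transpose_zero, neg_eq_zero] at this
    exact this
  · intro h
    have h2 : (H * Rh - Rt * T + H * Rc * T)ᵀ = 0 := by rw [key, h, neg_zero]
    have := congrArg transpose h2
    rwa [transpose_transpose, transpose_zero] at this
end

section
/- Let H, T be symmetric d × d real matrices and let R₂ʰ, R₂ᵗ, R₂ᶜ be d × d real matrices. Define R₁ʰ = (R₂ᵗ)ᵀ, R₁ᵗ = (R₂ʰ)ᵀ, and R₁ᶜ = −(R₂ᶜ)ᵀ. Then H R₁ʰ − R₁ᵗ T + H R₁ᶜ T = 0 if and only if T R₂ʰ − R₂ᵗ H + T R₂ᶜ H = 0. -/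
open Matrix

theorem mquinE_inverse_relation {d : ℕ}
    (H T R₂h R₂t R₂c : Matrix (Fin d) (Fin d) ℝ)
    (hH : Hᵀ = H) (hT : Tᵀ = T)
    (R₁h R₁t R₁c : Matrix (Fin d) (Fin d) ℝ)
    (h1 : R₁h = R₂tᵀ) (h2 : R₁t = R₂hᵀ) (h3 : R₁c = -(R₂cᵀ)) :
    H * R₁h - R₁t * T + H * R₁c * T = 0 ↔
      T * R₂h - R₂t * H + T * R₂c * H = 0 := by
  subst h1 h2 h3
  constructor <;> intro h <;> apply_fun Matrix.transpose at h <;>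
    simp [Matrix.transpose_add, Matrix.transpose_sub, Matrix.transpose_mul, hH, hT] at h ⊢ <;>
    · have := congrArg Neg.neg h
      linear_combination (norm := noncomm_ring) this
end

section
/- Let H, T₁, Rʰ, Rᵗ, Rᶜ be d × d real matrices with H and T₁ symmetric, and suppose rank(Rᵗ) + rank(Rᶜ) < d. If H Rʰ − Rᵗ T₁ + H Rᶜ T₁ = 0, then there exists a symmetric d × d real matrix T₂ with T₂ ≠ T₁ and H Rʰ − Rᵗ T₂ + H Rᶜ T₂ = 0. -/
lemma matrix_rank_add_le {d : ℕ} (A B : Matrix (Fin d) (Fin d) ℝ) :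
    (A + B).rank ≤ A.rank + B.rank := by
  rw [Matrix.rank, Matrix.rank, Matrix.rank, Matrix.mulVecLin_add]
  have hle : LinearMap.range (A.mulVecLin + B.mulVecLin)
      ≤ LinearMap.range A.mulVecLin ⊔ LinearMap.range B.mulVecLin := by
    rintro x ⟨y, rfl⟩
    exact Submodule.add_mem_sup ⟨y, rfl⟩ ⟨y, rfl⟩
  exact le_trans (Submodule.finrank_mono hle)
    (Submodule.finrank_add_le_finrank_add_finrank _ _)

theorem mquinE_models_one_to_N {d : ℕ}
    (H T₁ Rh Rt Rc : Matrix (Fin d) (Fin d) ℝ)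
    (hH : H.IsSymm) (hT₁ : T₁.IsSymm)
    (hrank : Rt.rank + Rc.rank < d)
    (h1 : H * Rh - Rt * T₁ + H * Rc * T₁ = 0) :
    ∃ T₂ : Matrix (Fin d) (Fin d) ℝ, T₂.IsSymm ∧ T₂ ≠ T₁ ∧
      H * Rh - Rt * T₂ + H * Rc * T₂ = 0 := by
  set M : Matrix (Fin d) (Fin d) ℝ := H * Rc + (-Rt) with hM
  have hrM : M.rank < d := by
    calc M.rank ≤ (H * Rc).rank + (-Rt).rank := matrix_rank_add_le _ _
      _ ≤ Rc.rank + Rt.rank := by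
          gcongr
          · exact Matrix.rank_mul_le_right _ _
          · rw [show (-Rt) = (-1 : Matrix (Fin d) (Fin d) ℝ) * Rt by rw [neg_one_mul]]
            exact Matrix.rank_mul_le_right _ _
      _ < d := by omega
  have hdet : M.det = 0 := by
    by_contra hne
    simp [Matrix.rank_of_isUnit M ((Matrix.isUnit_iff_isUnit_det M).mpr (isUnit_iff_ne_zero.mpr hne))] at hrM
  obtain ⟨v, hv0, hv⟩ := Matrix.exists_mulVec_eq_zero_iff.mpr hdet
  refine ⟨T₁ + Matrix.vecMulVec v v, ?_, ?_, ?_⟩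
  · rw [Matrix.IsSymm, Matrix.transpose_add, hT₁]
    congr 1
    ext i j
    simp [Matrix.vecMulVec_apply, mul_comm]
  · intro h
    have : Matrix.vecMulVec v v = 0 := by
      have := congrArg (· - T₁) h; simpa using this
    obtain ⟨i, hi⟩ := Function.ne_iff.mp hv0
    have := congrFun (congrFun this i) i
    simp [Matrix.vecMulVec_apply] at this
    exact hv0 (funext fun j => by tauto)
  · have hMv : M * Matrix.vecMulVec v v = 0 := by
      ext i j
      simp only [Matrix.mul_apply, Matrix.vecMulVec_apply, Matrix.zero_apply]
      have : M.mulVec v i = 0 := by rw [hv]; rfl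
      simp only [Matrix.mulVec, dotProduct] at this
      calc ∑ k, M i k * (v k * v j) = (∑ k, M i k * v k) * v j := by
            rw [Finset.sum_mul]; congr 1; ext k; ring
        _ = 0 := by rw [this, zero_mul]
    have expand : H * Rh - Rt * (T₁ + Matrix.vecMulVec v v) + H * Rc * (T₁ + Matrix.vecMulVec v v)
        = (H * Rh - Rt * T₁ + H * Rc * T₁) + M * Matrix.vecMulVec v v := by
      simp only [hM, Matrix.mul_add, Matrix.add_mul, Matrix.neg_mul]
      noncomm_ring
    rw [expand, h1, hMv, add_zero]
end

section
/- Let H₁, T, Rʰ, Rᵗ, Rᶜ be d × d real matrices with H₁ and T symmetric, and suppose rank(Rʰ) + rank(Rᶜ) < d. If H₁ Rʰ − Rᵗ T + H₁ Rᶜ T = 0, then there exists a symmetric d × d real matrix H₂ with H₂ ≠ H₁ and H₂ Rʰ − Rᵗ T + H₂ Rᶜ T = 0. -/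
open Matrix in

theorem mquinE_models_N_to_one {d : ℕ}
    (H₁ T Rh Rt Rc : Matrix (Fin d) (Fin d) ℝ)
    (hH₁ : H₁.IsSymm) (hT : T.IsSymm)
    (hrank : Rh.rank + Rc.rank < d)
    (h1 : H₁ * Rh - Rt * T + H₁ * Rc * T = 0) :
    ∃ H₂ : Matrix (Fin d) (Fin d) ℝ, H₂.IsSymm ∧ H₂ ≠ H₁ ∧
      H₂ * Rh - Rt * T + H₂ * Rc * T = 0 := by
  set M : Matrix (Fin d) (Fin d) ℝ := Rh + Rc * T with hM
  have hadd : M.rank ≤ Rh.rank + (Rc * T).rank := by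
    simp only [Matrix.rank, hM]
    have hr : LinearMap.range (Rh + Rc * T).mulVecLin ≤
        LinearMap.range Rh.mulVecLin ⊔ LinearMap.range (Rc * T).mulVecLin := by
      rintro x ⟨y, rfl⟩
      exact Submodule.mem_sup.2 ⟨Rh.mulVec y, ⟨y, rfl⟩, (Rc * T).mulVec y, ⟨y, rfl⟩,
        by simp [Matrix.mulVecLin_apply, Matrix.add_mulVec]⟩
    exact (Submodule.finrank_mono hr).trans
      (Submodule.finrank_add_le_finrank_add_finrank _ _)
  have hrM : M.rank < d :=
    lt_of_le_of_lt (hadd.trans (Nat.add_le_add_left (Matrix.rank_mul_le_left _ _) _)) hrank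
  -- find v ≠ 0 with (Mᵀ).mulVec v = 0
  have hker : ∃ v : Fin d → ℝ, v ≠ 0 ∧ (Mᵀ).mulVec v = 0 := by
    have hrt : (Mᵀ).rank < d := by rwa [Matrix.rank_transpose]
    have hrn := LinearMap.finrank_range_add_finrank_ker ((Mᵀ).mulVecLin)
    rw [Matrix.rank] at hrt
    have : 0 < Module.finrank ℝ (LinearMap.ker (Mᵀ).mulVecLin) := by
      have hd : Module.finrank ℝ (Fin d → ℝ) = d := by simp
      omega
    have hne : LinearMap.ker (Mᵀ).mulVecLin ≠ ⊥ := by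
      intro hbot
      rw [hbot] at this
      simp at this
    obtain ⟨v, hv, hvne⟩ := Submodule.exists_mem_ne_zero_of_ne_bot hne
    exact ⟨v, hvne, hv⟩
  obtain ⟨v, hv0, hvM⟩ := hker
  set Δ : Matrix (Fin d) (Fin d) ℝ := Matrix.vecMulVec v v with hΔ
  have hΔM : Δ * M = 0 := by
    ext i j
    have : Mᵀ.mulVec v j = 0 := by rw [hvM]; rfl
    simp only [Matrix.mulVec, dotProduct, Matrix.transpose_apply] at this
    simp only [Matrix.mul_apply, hΔ, Matrix.vecMulVec_apply, Matrix.zero_apply]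
    calc ∑ k, v i * v k * M k j = v i * ∑ k, M k j * v k := by
          rw [Finset.mul_sum]; congr 1; ext k; ring
    _ = 0 := by rw [this, mul_zero]
  refine ⟨H₁ + Δ, ?_, ?_, ?_⟩
  · unfold Matrix.IsSymm
    rw [Matrix.transpose_add, hH₁]
    congr 1
    ext i j
    simp [hΔ, Matrix.vecMulVec_apply, mul_comm]
  · intro h
    apply hv0
    have hΔ0 : Δ = 0 := by
      have := congrArg (fun X => X - H₁) h
      simpa using this
    ext i
    have : Δ i i = 0 := by rw [hΔ0]; rfl
    simp only [hΔ, Matrix.vecMulVec_apply] at this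
    have := mul_self_eq_zero.mp this
    simpa using this
  · have : (H₁ + Δ) * Rh - Rt * T + (H₁ + Δ) * Rc * T
        = (H₁ * Rh - Rt * T + H₁ * Rc * T) + Δ * M := by
      rw [hM]; noncomm_ring
    rw [this, h1, hΔM, add_zero]
end

section
/- Let E₁, E₂, E₃ and R₁ʰ, R₁ᵗ, R₁ᶜ, R₂ʰ, R₂ᵗ, R₂ᶜ be d × d real matrices. If E₁ R₁ʰ − R₁ᵗ E₂ + E₁ R₁ᶜ E₂ = 0 and E₂ R₂ʰ − R₂ᵗ E₃ + E₂ R₂ᶜ E₃ = 0, then E₁ (R₁ʰ R₂ʰ) − (R₁ᵗ R₂ᵗ) E₃ + E₁ (R₁ʰ R₂ᶜ + R₁ᶜ R₂ᵗ) E₃ = 0. -/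
theorem mquinE_composition {d : ℕ}
    (E₁ E₂ E₃ R₁h R₁t R₁c R₂h R₂t R₂c : Matrix (Fin d) (Fin d) ℝ)
    (h1 : E₁ * R₁h - R₁t * E₂ + E₁ * R₁c * E₂ = 0)
    (h2 : E₂ * R₂h - R₂t * E₃ + E₂ * R₂c * E₃ = 0) :
    E₁ * (R₁h * R₂h) - (R₁t * R₂t) * E₃ +
      E₁ * (R₁h * R₂c + R₁c * R₂t) * E₃ = 0 := by
  have key : E₁ * (R₁h * R₂h) - (R₁t * R₂t) * E₃ +
      E₁ * (R₁h * R₂c + R₁c * R₂t) * E₃ =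
      (E₁ * R₁h - R₁t * E₂ + E₁ * R₁c * E₂) * R₂h
      + R₁t * (E₂ * R₂h - R₂t * E₃ + E₂ * R₂c * E₃)
      + (E₁ * R₁h - R₁t * E₂ + E₁ * R₁c * E₂) * (R₂c * E₃)
      - E₁ * R₁c * (E₂ * R₂h - R₂t * E₃ + E₂ * R₂c * E₃) := by
    noncomm_ring
  rw [key, h1, h2]
  simp
end
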